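/- arXiv:2312.08226 — 2 statements merged into one kernel-verified Lean document; each statement's English description precedes it below -/
import Mathlib

section
/- Let G be a simple graph, u, v vertices of G, and G' = G[u→v] the graph obtained by the Kelmans operation. For every integer r ≥ 1, the number of copies of the star K_{1,r} in G' is at least the number of copies of K_{1,r} in G, where the number of copies of K_{1,r} equals ∑_{w ∈ V(G)} C(deg(w), r). -/
/-- The Kelmans operation `G[u → v]`: every edge `wu` with `w ∈ N(u) \\ N[v]` is removed
and replaced by the edge `wv`. -/
def kelmans {V : Type*} (G : SimpleGraph V) (u v : V) : SimpleGraph V where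
  Adj x y := x ≠ y ∧
    ((G.Adj x y ∧ ¬ ((x = u ∧ G.Adj u y ∧ ¬ G.Adj v y ∧ y ≠ v) ∨
                     (y = u ∧ G.Adj u x ∧ ¬ G.Adj v x ∧ x ≠ v))) ∨
     ((x = v ∧ G.Adj u y ∧ ¬ G.Adj v y ∧ y ≠ v) ∨
      (y = v ∧ G.Adj u x ∧ ¬ G.Adj v x ∧ x ≠ v)))
  symm := by
    constructor
    rintro x y ⟨hxy, h⟩
    refine ⟨hxy.symm, ?_⟩
    have hsymm : G.Adj x y ↔ G.Adj y x := ⟨SimpleGraph.Adj.symm, SimpleGraph.Adj.symm⟩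
    tauto
  loopless := by constructor; rintro x ⟨h, -⟩; exact h rfl

/-! Moving `k` elements from a set of size `c + k` to a set of size `b ≥ c` does not decrease
`∑ C(deg, r)`, because `n ↦ C(n, r)` is convex: `C(n+1, r) - C(n, r) = C(n, r-1)` grows with `n`.
Under `G[u → v]` only the degrees of `u` and `v` change, from `c + k` and `b` to `c` and `b + k`,
where `k = |N(u) \ N[v]|`; and `c ≤ b` because `N(u) ∩ N[v]` embeds into `N(v)`. -/

theorem Nat.choose_add_add_choose_le {c b : ℕ} (h : c ≤ b) (r k : ℕ) :
    (c + k).choose r + b.choose r ≤ c.choose r + (b + k).choose r := by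
  induction k with
  | zero => rfl
  | succ k ih =>
    cases r with
    | zero => simp
    | succ s =>
      have hmono : (c + k).choose s ≤ (b + k).choose s := Nat.choose_le_choose _ (by omega)
      have hc := Nat.choose_succ_succ' (c + k) s
      have hb := Nat.choose_succ_succ' (b + k) s
      rw [← Nat.add_assoc, ← Nat.add_assoc]
      omega

namespace SimpleGraph

variable {V : Type*} (G : SimpleGraph V) (u v : V)

/-- `N(u) \ N[v]`. -/
def kelmansMoved : Set V := {w | G.Adj u w ∧ ¬ G.Adj v w ∧ w ≠ v}

theorem kelmansMoved_subset : G.kelmansMoved u v ⊆ G.neighborSet u := fun _ hw => hw.1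

theorem disjoint_neighborSet_kelmansMoved : Disjoint (G.neighborSet v) (G.kelmansMoved u v) :=
  Set.disjoint_left.2 fun _ hw hmoved => hmoved.2.1 hw

@[simp]
theorem kelmans_self : kelmans G u u = G := by
  ext x y
  simp only [kelmans]
  exact ⟨by tauto, fun h => ⟨h.ne, Or.inl ⟨h, by tauto⟩⟩⟩

variable {u v}

theorem neighborSet_kelmans_left (huv : u ≠ v) :
    (kelmans G u v).neighborSet u = G.neighborSet u \ G.kelmansMoved u v := by
  ext x
  simp only [mem_neighborSet, kelmans, kelmansMoved, Set.mem_sdiff, Set.mem_ofPred_eq]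
  have hne : G.Adj u x → u ≠ x := Adj.ne
  have := G.loopless.irrefl u
  tauto

theorem neighborSet_kelmans_right :
    (kelmans G u v).neighborSet v = G.neighborSet v ∪ G.kelmansMoved u v := by
  ext x
  simp only [mem_neighborSet, kelmans, kelmansMoved, Set.mem_union, Set.mem_ofPred_eq]
  have hne : G.Adj v x → v ≠ x := Adj.ne
  have := G.loopless.irrefl v
  tauto

/-- A vertex `w ∉ {u, v}` at most trades its neighbour `u` for `v`. -/
theorem ncard_neighborSet_kelmans_of_ne [Finite V] {w : V} (hwu : w ≠ u) (hwv : w ≠ v) :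
    ((kelmans G u v).neighborSet w).ncard = (G.neighborSet w).ncard := by
  have e1 : G.Adj w u ↔ G.Adj u w := adj_comm G w u
  have e2 : G.Adj w v ↔ G.Adj v w := adj_comm G w v
  by_cases hmoved : G.Adj u w ∧ ¬ G.Adj v w
  · have hset : (kelmans G u v).neighborSet w = insert v (G.neighborSet w \ {u}) := by
      ext x
      simp only [mem_neighborSet, kelmans, Set.mem_insert_iff, Set.mem_sdiff,
        Set.mem_singleton_iff]
      constructor
      · rintro ⟨-, h⟩; tauto
      · rintro (rfl | ⟨hx, hxu⟩)
        · exact ⟨hwv, Or.inr (Or.inr ⟨rfl, hmoved.1, hmoved.2, hwv⟩)⟩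
        · exact ⟨hx.ne, Or.inl ⟨hx, by tauto⟩⟩
    have hv : v ∉ G.neighborSet w \ {u} := fun h => hmoved.2 h.1.symm
    rw [hset, Set.ncard_insert_of_notMem hv]
    exact Set.ncard_sdiff_singleton_add_one hmoved.1.symm
  · have hset : (kelmans G u v).neighborSet w = G.neighborSet w := by
      ext x
      simp only [mem_neighborSet, kelmans]
      exact ⟨by tauto, fun h => ⟨h.ne, Or.inl ⟨h, by tauto⟩⟩⟩
    rw [hset]

/-- `swap u v` embeds the neighbours `u` keeps into `N(v)`: a kept neighbour `x ≠ v` is a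
neighbour of `v`, and if `v` itself is kept then `u ∈ N(v)`. -/
theorem ncard_neighborSet_diff_kelmansMoved_le [Finite V] :
    (G.neighborSet u \ G.kelmansMoved u v).ncard ≤ (G.neighborSet v).ncard := by
  classical
  refine Set.ncard_le_ncard_of_injOn (Equiv.swap u v) ?_ (Equiv.injective _).injOn
  rintro x ⟨hux, hkept⟩
  simp only [kelmansMoved, Set.mem_ofPred_eq, not_and, not_not] at hkept
  by_cases hvx : G.Adj v x
  · rwa [Equiv.swap_apply_of_ne_of_ne hux.ne' hvx.ne']
  · rw [hkept hux hvx, Equiv.swap_apply_right]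
    exact (hkept hux hvx ▸ hux).symm

theorem choose_ncard_neighborSet_add_le_kelmans [Finite V] (huv : u ≠ v) (r : ℕ) :
    (G.neighborSet u).ncard.choose r + (G.neighborSet v).ncard.choose r ≤
      ((kelmans G u v).neighborSet u).ncard.choose r +
        ((kelmans G u v).neighborSet v).ncard.choose r := by
  rw [G.neighborSet_kelmans_left huv, G.neighborSet_kelmans_right,
    Set.ncard_union_eq (G.disjoint_neighborSet_kelmansMoved u v),
    ← Set.ncard_sdiff_add_ncard_of_subset (G.kelmansMoved_subset u v)]
  exact Nat.choose_add_add_choose_le G.ncard_neighborSet_diff_kelmansMoved_le r _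

end SimpleGraph

theorem stmt_4_general {V : Type*} [Fintype V] (G : SimpleGraph V) (u v : V) (r : ℕ) :
    ∑ w : V, Nat.choose ((G.neighborSet w).ncard) r ≤
      ∑ w : V, Nat.choose (((kelmans G u v).neighborSet w).ncard) r := by
  classical
  obtain rfl | huv := eq_or_ne u v
  · rw [G.kelmans_self]
  have hpair : ({u, v} : Finset V) ⊆ Finset.univ := Finset.subset_univ _
  rw [← Finset.sum_sdiff hpair, ← Finset.sum_sdiff hpair, Finset.sum_pair huv,
    Finset.sum_pair huv]
  refine Nat.add_le_add (Finset.sum_le_sum fun w hw => ?_)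
    (G.choose_ncard_neighborSet_add_le_kelmans huv r)
  simp only [Finset.mem_sdiff, Finset.mem_insert, Finset.mem_singleton, not_or] at hw
  rw [G.ncard_neighborSet_kelmans_of_ne hw.2.1 hw.2.2]

/-- The number of copies of the star `K_{1,r}`, i.e. `∑_w C(deg w, r)`,
does not decrease under the Kelmans operation. -/
theorem stmt_4 {V : Type*} [Fintype V] (G : SimpleGraph V) (u v : V) (r : ℕ) (hr : 1 ≤ r) :
    ∑ w : V, Nat.choose ((G.neighborSet w).ncard) r ≤
      ∑ w : V, Nat.choose (((kelmans G u v).neighborSet w).ncard) r :=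
  stmt_4_general G u v r
end

section
/- Let n, k, s be integers with n ≥ 2k + 2 and 1 ≤ s ≤ k. The graph K_s ∨ ((n−2k+s−1)K_1 ∪ K_{2k−2s+1}) is connected and has matching number exactly k, i.e., it has a matching of size k but no matching of size k + 1. -/
/-!
Vertex `0` lies in the dominating clique `X = K_s`, so it is universal and the graph is connected.
A matching covers twice as many vertices as it has edges; the independent vertices outside
`X ∪ Y` can only be matched into `X`, so at most `s` of them are covered, besides at most
`|X ∪ Y| = 2k + 1 - s` others. Hence at most `2k + 1` vertices are covered and a matching has at
most `k` edges.
-/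

/-- `G` has a matching of size `m`: a set of `m` pairwise disjoint edges. -/
def hasMatchingOfSize {V : Type*} (G : SimpleGraph V) (m : ℕ) : Prop :=
  ∃ M : SimpleGraph.Subgraph G, M.IsMatching ∧ M.edgeSet.ncard = m

/-- The graph `W n k s = K_s ∨ ((n−k+s)K_1 ∪ K_{k−2s})` on vertex set `Fin n`:
the first `s` vertices form a dominating clique `X`, the vertices with index
in `[s, k−s)` form a clique `Y` (so `X ∪ Y` is a clique on `k − s` vertices),
and the remaining `n − k + s` vertices are independent, joined only to `X`. -/
def Wgraph (n k s : ℕ) : SimpleGraph (Fin n) where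
  Adj x y := x ≠ y ∧ (x.val < s ∨ y.val < s ∨ (x.val < k - s ∧ y.val < k - s))
  symm := by constructor; rintro x y ⟨hxy, h⟩; exact ⟨hxy.symm, by tauto⟩
  loopless := by constructor; rintro x ⟨h, -⟩; exact h rfl

open SimpleGraph

namespace SimpleGraph.Subgraph

variable {V : Type*} {G : SimpleGraph V} {M : G.Subgraph}

theorem IsMatching.ncard_verts [Finite V] (hM : M.IsMatching) :
    M.verts.ncard = 2 * M.edgeSet.ncard := by
  have : Fintype M.edgeSet := Fintype.ofFinite _
  have hfiber : ∀ e, Nat.card {v // hM.toEdge v = e} = 2 := by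
    rintro ⟨e, he⟩
    induction e using Sym2.ind with | _ u v =>
    change Nat.card ↥(hM.toEdge ⁻¹' {⟨s(u, v), he⟩}) = 2
    rw [Nat.card_coe_set_eq, hM.toEdge_preimage_singleton he,
      Set.ncard_pair (by simpa using he.ne)]
  rw [← Nat.card_coe_set_eq, ← Nat.card_congr (Equiv.sigmaFiberEquiv hM.toEdge),
    Nat.card_sigma, Finset.sum_congr rfl fun e _ => hfiber e, Finset.sum_const,
    Finset.card_univ, ← Nat.card_eq_fintype_card, Nat.card_coe_set_eq, smul_eq_mul, mul_comm]

theorem IsMatching.ncard_verts_inter_le [Finite V] (hM : M.IsMatching) {C X : Set V}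
    (hCX : ∀ v ∈ C, ∀ w, G.Adj v w → w ∈ X) :
    (M.verts ∩ C).ncard ≤ (M.verts ∩ X).ncard := by
  choose! p hp using fun v (hv : v ∈ M.verts ∩ C) => (hM hv.1).exists
  refine Set.ncard_le_ncard_of_injOn p (fun v hv => ?_) (fun v hv w hw hpvw => ?_)
  · exact ⟨(hp v hv).snd_mem, hCX v hv.2 _ (M.adj_sub (hp v hv))⟩
  · exact hM.eq_of_adj_right (hp v hv) (hpvw ▸ hp w hw)

end SimpleGraph.Subgraph

theorem hasMatchingOfSize_of_injective {ι V : Type*} {G : SimpleGraph V}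
    {f g : ι → V} (hadj : ∀ i, G.Adj (f i) (g i)) (hinj : Function.Injective (Sum.elim f g)) :
    hasMatchingOfSize G (Nat.card ι) := by
  obtain ⟨hf, hg, hfg⟩ := Sum.elim_injective.mp hinj
  have hedge : Function.Injective fun i => s(f i, g i) := by
    intro i j hij
    rcases Sym2.eq_iff.mp hij with ⟨h, -⟩ | ⟨h, -⟩
    · exact hf h
    · exact absurd h (hfg i j)
  refine ⟨⨆ i, G.subgraphOfAdj (hadj i),
    Subgraph.IsMatching.iSup (fun i => .subgraphOfAdj _) fun i j hij => ?_, ?_⟩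
  · simp only [support_subgraphOfAdj, Set.disjoint_insert_left, Set.disjoint_singleton_left,
      Set.mem_insert_iff, Set.mem_singleton_iff]
    exact ⟨not_or.mpr ⟨hf.ne hij, hfg i j⟩, not_or.mpr ⟨(hfg j i).symm, hg.ne hij⟩⟩
  · rw [Subgraph.edgeSet_iSup]
    simp only [edgeSet_subgraphOfAdj, Set.iUnion_singleton_eq_range]
    exact Set.ncard_range_of_injective hedge

theorem Fin.ncard_setOf_val_lt_le (n m : ℕ) : {v : Fin n | v.val < m}.ncard ≤ m := by
  calc {v : Fin n | v.val < m}.ncard ≤ (↑(Finset.range m) : Set ℕ).ncard :=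
        Set.ncard_le_ncard_of_injOn Fin.val (fun v hv => by simpa using hv) Fin.val_injective.injOn
    _ = m := by rw [Set.ncard_coe_finset, Finset.card_range]

namespace Wgraph

variable {n m s : ℕ}

theorem isUniversal {v : Fin n} (hv : v.val < s) : (Wgraph n m s).IsUniversal v :=
  fun _ hvw => ⟨hvw, Or.inl hv⟩

theorem connected (hn : 0 < n) (hs : 0 < s) : (Wgraph n m s).Connected :=
  Connected.of_isUniversal (isUniversal (v := ⟨0, hn⟩) hs)

/-- Pair vertex `i` with `2k - 1 - i` for `i < k`: when `i ≥ s` both ends lie in the clique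
`X ∪ Y`, otherwise `i ∈ X` is universal. -/
theorem hasMatchingOfSize_of_two_mul_le {k : ℕ} (hn : 2 * k ≤ n) (hm : 2 * k ≤ m) :
    hasMatchingOfSize (Wgraph n m s) k := by
  let f : Fin k → Fin n := fun i => ⟨i, by have := i.isLt; omega⟩
  let g : Fin k → Fin n := fun i => ⟨2 * k - 1 - i, by omega⟩
  have hadj : ∀ i, (Wgraph n m s).Adj (f i) (g i) := fun i => by
    have := i.isLt
    simp only [Wgraph, f, g, ne_eq, Fin.ext_iff]
    omega
  have hinj : Function.Injective (Sum.elim f g) := by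
    refine Function.Injective.sumElim (fun i j h => ?_) (fun i j h => ?_) (fun i j h => ?_) <;>
      have := i.isLt <;> have := j.isLt <;> simp only [f, g, Fin.mk.injEq] at h <;> omega
  simpa using hasMatchingOfSize_of_injective hadj hinj

theorem two_mul_ncard_edgeSet_le (hs : 2 * s ≤ m) {M : (Wgraph n m s).Subgraph}
    (hM : M.IsMatching) : 2 * M.edgeSet.ncard ≤ m := by
  let C : Set (Fin n) := {v | m - s ≤ v.val}
  have hCX : ∀ v ∈ C, ∀ w, (Wgraph n m s).Adj v w → w ∈ {w : Fin n | w.val < s} := by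
    rintro v hv w ⟨-, hvw⟩
    simp only [C, Set.mem_ofPred_eq] at hv ⊢
    omega
  have hcompl : Cᶜ = {v : Fin n | v.val < m - s} := by
    ext v
    simp only [C, Set.mem_compl_iff, Set.mem_ofPred_eq, not_le]
  calc 2 * M.edgeSet.ncard = (M.verts ∩ C).ncard + (M.verts \ C).ncard := by
        rw [← hM.ncard_verts, Set.ncard_inter_add_ncard_sdiff_eq_ncard]
    _ ≤ {w : Fin n | w.val < s}.ncard + Cᶜ.ncard :=
        add_le_add ((hM.ncard_verts_inter_le hCX).trans (Set.ncard_le_ncard Set.inter_subset_right))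
          (Set.ncard_le_ncard fun v hv => hv.2)
    _ ≤ s + (m - s) := by
        rw [hcompl]
        exact add_le_add (Fin.ncard_setOf_val_lt_le n s) (Fin.ncard_setOf_val_lt_le n (m - s))
    _ = m := by omega

end Wgraph

/-- For `n ≥ 2k + 2` and `1 ≤ s ≤ k`, the graph
`K_s ∨ ((n−2k+s−1)K_1 ∪ K_{2k−2s+1})` (which is `W_{n,2k+1,s}`) is connected
and has matching number exactly `k`. -/
theorem stmt_12 (n k s : ℕ) (hn : 2 * k + 2 ≤ n) (hs1 : 1 ≤ s) (hsk : s ≤ k) :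
    (Wgraph n (2 * k + 1) s).Connected ∧
    hasMatchingOfSize (Wgraph n (2 * k + 1) s) k ∧
    ¬ hasMatchingOfSize (Wgraph n (2 * k + 1) s) (k + 1) := by
  refine ⟨Wgraph.connected (by omega) hs1,
    Wgraph.hasMatchingOfSize_of_two_mul_le (by omega) (by omega), ?_⟩
  rintro ⟨M, hM, hcard⟩
  have := Wgraph.two_mul_ncard_edgeSet_le (by omega) hM
  omega
end
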